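/- Let m ≥ 1 be an integer and assume r0 : [0,π] → ℝ satisfies (H1), (H2) and the equatorial symmetry r0(π−φ) = r0(φ). Let f : [0,π] × ℝ → ℝ be continuous, 2π-periodic in its second variable, with f(φ,−θ) = f(φ,θ), f(φ, θ + 2π/m) = f(φ,θ), and f(π−φ,θ) = f(φ,θ) for all φ, θ. Set r = r0 + f and define I(f)(φ,θ) = −(1/(4π)) ∫₀^π ∫₀^{2π} ∫₀^{r(ϕ,η)} ρ·sin ϕ / |(ρ·e^{iη}, cos ϕ) − (r(φ,θ)·e^{iθ}, cos φ)| dρ dη dϕ (a convergent integral, the Newtonian potential of the patch evaluated on its boundary). Then for all (φ,θ) ∈ [0,π] × ℝ: (i) I(f)(π−φ,θ) = I(f)(φ,θ); (ii) I(f)(φ,−θ) = I(f)(φ,θ); (iii) I(f)(φ, θ + 2π/m) = I(f)(φ,θ). -/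
import Mathlib


open Real Set MeasureTheory intervalIntegral

/-- The Newtonian potential of the patch bounded by
`(ϕ,η) ↦ (r(ϕ,η) e^{iη}, cos ϕ)`, evaluated at the boundary point
`(r(φ,θ) e^{iθ}, cos φ)`:
`I(r)(φ,θ) = −(1/(4π)) ∫₀^π ∫₀^{2π} ∫₀^{r(ϕ,η)}
   ρ sin ϕ / |(ρ e^{iη}, cos ϕ) − (r(φ,θ) e^{iθ}, cos φ)| dρ dη dϕ`. -/
noncomputable def Ifun (r : ℝ → ℝ → ℝ) (φ θ : ℝ) : ℝ :=
  -(1 / (4 * π)) *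
    ∫ ϕ in (0:ℝ)..π, ∫ η in (0:ℝ)..(2 * π), ∫ ρ in (0:ℝ)..(r ϕ η),
      ρ * Real.sin ϕ /
        Real.sqrt ((ρ * Real.cos η - r φ θ * Real.cos θ) ^ 2 +
          (ρ * Real.sin η - r φ θ * Real.sin θ) ^ 2 +
          (Real.cos ϕ - Real.cos φ) ^ 2)

private lemma key_dist (ρ s a b : ℝ) :
    (ρ * Real.cos a - s * Real.cos b) ^ 2 + (ρ * Real.sin a - s * Real.sin b) ^ 2 =
      ρ ^ 2 + s ^ 2 - 2 * ρ * s * Real.cos (a - b) := by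
  rw [Real.cos_sub]
  linear_combination ρ ^ 2 * Real.sin_sq_add_cos_sq a + s ^ 2 * Real.sin_sq_add_cos_sq b

/-- Let `m ≥ 1`, let `r0` satisfy (H1), (H2) and the equatorial symmetry
`r0(π−φ) = r0(φ)`, and let `f` be continuous, `2π`-periodic in the angle, even, `2π/m`
periodic and equatorially symmetric. Then, with `r = r0 + f`, the Newtonian potential `I`
satisfies, for all `(φ,θ) ∈ [0,π] × ℝ`:
(i) `I(π−φ,θ) = I(φ,θ)`; (ii) `I(φ,−θ) = I(φ,θ)`; (iii) `I(φ,θ+2π/m) = I(φ,θ)`. -/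
theorem stmt14 (m : ℕ) (hm : 1 ≤ m) (r0 : ℝ → ℝ)
    (hC2 : ContDiffOn ℝ 2 r0 (Set.Icc 0 π))
    (h0 : r0 0 = 0) (hπ : r0 π = 0)
    (hpos : ∀ φ ∈ Set.Ioo (0:ℝ) π, 0 < r0 φ)
    (C0 : ℝ) (hC0 : 0 < C0)
    (hH2 : ∀ φ ∈ Set.Icc (0:ℝ) π, C0⁻¹ * Real.sin φ ≤ r0 φ ∧ r0 φ ≤ C0 * Real.sin φ)
    (hr0sym : ∀ φ ∈ Set.Icc (0:ℝ) π, r0 (π - φ) = r0 φ)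
    (f : ℝ → ℝ → ℝ)
    (hf_cont : ContinuousOn (fun p : ℝ × ℝ => f p.1 p.2) (Set.Icc 0 π ×ˢ Set.univ))
    (hf_per : ∀ φ ∈ Set.Icc (0:ℝ) π, ∀ θ : ℝ, f φ (θ + 2 * π) = f φ θ)
    (hf_even : ∀ φ ∈ Set.Icc (0:ℝ) π, ∀ θ : ℝ, f φ (-θ) = f φ θ)
    (hf_fold : ∀ φ ∈ Set.Icc (0:ℝ) π, ∀ θ : ℝ, f φ (θ + 2 * π / m) = f φ θ)
    (hf_sym : ∀ φ ∈ Set.Icc (0:ℝ) π, ∀ θ : ℝ, f (π - φ) θ = f φ θ) :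
    ∀ φ ∈ Set.Icc (0:ℝ) π, ∀ θ : ℝ,
      Ifun (fun φ' θ' => r0 φ' + f φ' θ') (π - φ) θ =
        Ifun (fun φ' θ' => r0 φ' + f φ' θ') φ θ ∧
      Ifun (fun φ' θ' => r0 φ' + f φ' θ') φ (-θ) =
        Ifun (fun φ' θ' => r0 φ' + f φ' θ') φ θ ∧
      Ifun (fun φ' θ' => r0 φ' + f φ' θ') φ (θ + 2 * π / m) =
        Ifun (fun φ' θ' => r0 φ' + f φ' θ') φ θ := by
  intro φ hφ θ
  set r : ℝ → ℝ → ℝ := fun φ' θ' => r0 φ' + f φ' θ' with hrdef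
  have hrsym : ∀ ϕ ∈ Set.Icc (0:ℝ) π, ∀ η : ℝ, r (π - ϕ) η = r ϕ η := by
    intro ϕ hϕ η; simp only [hrdef]; rw [hr0sym ϕ hϕ, hf_sym ϕ hϕ η]
  have hrper : ∀ ϕ ∈ Set.Icc (0:ℝ) π, ∀ η : ℝ, r ϕ (η + 2 * π) = r ϕ η := by
    intro ϕ hϕ η; simp only [hrdef]; rw [hf_per ϕ hϕ η]
  have hreven : ∀ ϕ ∈ Set.Icc (0:ℝ) π, ∀ η : ℝ, r ϕ (-η) = r ϕ η := by
    intro ϕ hϕ η; simp only [hrdef]; rw [hf_even ϕ hϕ η]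
  have hrfold : ∀ ϕ ∈ Set.Icc (0:ℝ) π, ∀ η : ℝ, r ϕ (η + 2 * π / m) = r ϕ η := by
    intro ϕ hϕ η; simp only [hrdef]; rw [hf_fold ϕ hϕ η]
  refine ⟨?_, ?_, ?_⟩
  · -- (i) equatorial symmetry
    unfold Ifun
    congr 1
    have hsub := intervalIntegral.integral_comp_sub_left (a := 0) (b := π)
      (fun ϕ => ∫ η in (0:ℝ)..(2 * π), ∫ ρ in (0:ℝ)..(r ϕ η),
        ρ * Real.sin ϕ /
          Real.sqrt ((ρ * Real.cos η - r φ θ * Real.cos θ) ^ 2 +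
            (ρ * Real.sin η - r φ θ * Real.sin θ) ^ 2 +
            (Real.cos ϕ - Real.cos φ) ^ 2)) π
    simp only [sub_self, sub_zero] at hsub
    rw [← hsub]
    apply intervalIntegral.integral_congr
    intro ϕ hϕ
    rw [Set.uIcc_of_le Real.pi_pos.le] at hϕ
    dsimp only
    simp only [hrsym ϕ hϕ, hrsym φ hφ, Real.sin_pi_sub, Real.cos_pi_sub]
    have hsq : ∀ x y : ℝ, (x - -y) ^ 2 = (-x - y) ^ 2 := fun x y => by ring
    simp only [hsq]
  · -- (ii) evenness
    unfold Ifun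
    congr 1
    apply intervalIntegral.integral_congr
    intro ϕ hϕ
    rw [Set.uIcc_of_le Real.pi_pos.le] at hϕ
    dsimp only
    have hr2 : ∀ η : ℝ, r ϕ (2 * π - η) = r ϕ η := by
      intro η
      rw [show 2 * π - η = -η + 2 * π by ring, hrper ϕ hϕ, hreven ϕ hϕ]
    have hsub := intervalIntegral.integral_comp_sub_left (a := 0) (b := 2 * π)
      (fun η => ∫ ρ in (0:ℝ)..(r ϕ η),
        ρ * Real.sin ϕ /
          Real.sqrt ((ρ * Real.cos η - r φ θ * Real.cos θ) ^ 2 +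
            (ρ * Real.sin η - r φ θ * Real.sin θ) ^ 2 +
            (Real.cos ϕ - Real.cos φ) ^ 2)) (2 * π)
    simp only [sub_self, sub_zero] at hsub
    rw [← hsub]
    congr 1
    funext η
    rw [hr2 η]
    congr 1
    funext ρ
    simp only [key_dist, hreven φ hφ]
    rw [show 2 * π - η - θ = -((η - -θ) - 2 * π) by ring, Real.cos_neg,
      Real.cos_sub_two_pi]
  · -- (iii) m-fold symmetry
    unfold Ifun
    congr 1
    apply intervalIntegral.integral_congr
    intro ϕ hϕ
    rw [Set.uIcc_of_le Real.pi_pos.le] at hϕ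
    dsimp only
    have hr3 : ∀ η : ℝ, r ϕ (η - 2 * π / m) = r ϕ η := by
      intro η
      rw [← hrfold ϕ hϕ (η - 2 * π / m), show η - 2 * π / (m:ℝ) + 2 * π / (m:ℝ) = η by ring]
    set G : ℝ → ℝ := fun η => ∫ ρ in (0:ℝ)..(r ϕ η),
        ρ * Real.sin ϕ /
          Real.sqrt ((ρ * Real.cos η - r φ θ * Real.cos θ) ^ 2 +
            (ρ * Real.sin η - r φ θ * Real.sin θ) ^ 2 +
            (Real.cos ϕ - Real.cos φ) ^ 2) with hGdef
    have hP : Function.Periodic G (2 * π) := by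
      intro η
      simp only [hGdef, hrper ϕ hϕ, Real.cos_add_two_pi, Real.sin_add_two_pi]
    have hstep1 : (∫ η in (0:ℝ)..(2 * π), ∫ ρ in (0:ℝ)..(r ϕ η),
        ρ * Real.sin ϕ /
          Real.sqrt ((ρ * Real.cos η - r φ (θ + 2 * π / m) * Real.cos (θ + 2 * π / m)) ^ 2 +
            (ρ * Real.sin η - r φ (θ + 2 * π / m) * Real.sin (θ + 2 * π / m)) ^ 2 +
            (Real.cos ϕ - Real.cos φ) ^ 2)) =
        ∫ η in (0:ℝ)..(2 * π), G (η - 2 * π / m) := by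
      congr 1
      funext η
      simp only [hGdef]
      rw [hr3 η]
      congr 1
      funext ρ
      simp only [key_dist, hrfold φ hφ θ]
      rw [show η - 2 * π / (m:ℝ) - θ = η - (θ + 2 * π / (m:ℝ)) by ring]
    rw [hstep1]
    have hsub := intervalIntegral.integral_comp_sub_right (a := 0) (b := 2 * π) G (2 * π / m)
    rw [hsub]
    have hper2 := hP.intervalIntegral_add_eq (-(2 * π / (m:ℝ))) 0
    rw [show (0:ℝ) - 2 * π / (m:ℝ) = -(2 * π / (m:ℝ)) by ring,
      show 2 * π - 2 * π / (m:ℝ) = -(2 * π / (m:ℝ)) + 2 * π by ring, hper2, zero_add]
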